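/- arXiv:1711.00954 — 2 statements merged into one kernel-verified Lean document; each statement's English description precedes it below -/
import Mathlib

section
/- Let r ≥ 1, let B¹ and B² be nonzero real r×r matrices, and let M₁ be a real r²×m matrix and M₂ a real r²×p matrix. Suppose there are constants σ₁, σ₂ > 0 and κ ≥ 1 such that ‖M₁ᵀ v‖ ≥ σ₁‖v‖ and ‖M₂ᵀ v‖ ≥ σ₂‖v‖ hold for all vectors v ∈ ℝ^{r²}, and the operator norms satisfy ‖M₁‖₂ ≤ κσ₁ and ‖M₂‖₂ ≤ κσ₂. If for some 0 < α ≤ 1 the matrix S := M₁ᵀ(B¹ ⊗ B²)M₂ satisfies ‖S‖₂² ≥ α·‖S‖_F², then (‖B¹‖₂²/‖B¹‖_F²)·(‖B²‖₂²/‖B²‖_F²) ≥ α/κ⁴; in particular ‖B¹‖₂² ≥ (α/κ⁴)‖B¹‖_F² and ‖B²‖₂² ≥ (α/κ⁴)‖B²‖_F². -/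
open Matrix
open scoped Kronecker

/-- The Euclidean norm of a real vector. -/
noncomputable def euclNorm {n : Type*} [Fintype n] (v : n → ℝ) : ℝ :=
  Real.sqrt (∑ i, v i ^ 2)

/-- The Frobenius norm of a real matrix. -/
noncomputable def frobNorm {m n : Type*} [Fintype m] [Fintype n] (M : Matrix m n ℝ) : ℝ :=
  Real.sqrt (∑ i, ∑ j, M i j ^ 2)

/-- The spectral norm of a real matrix (operator norm induced by Euclidean norms). -/
noncomputable def specNorm {m n : Type*} [Fintype m] [Fintype n] (M : Matrix m n ℝ) : ℝ :=
  sSup {x : ℝ | ∃ v : n → ℝ, euclNorm v = 1 ∧ x = euclNorm (M.mulVec v)}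

section Helpers

variable {n m p : Type*} [Fintype n] [Fintype m] [Fintype p]

lemma esq_nonneg (v : n → ℝ) : 0 ≤ ∑ i, v i ^ 2 :=
  Finset.sum_nonneg fun _ _ => sq_nonneg _

lemma euclNorm_nonneg (v : n → ℝ) : 0 ≤ euclNorm v := Real.sqrt_nonneg _

lemma euclNorm_sq (v : n → ℝ) : euclNorm v ^ 2 = ∑ i, v i ^ 2 :=
  Real.sq_sqrt (esq_nonneg v)

lemma euclNorm_eq_zero {v : n → ℝ} (h : euclNorm v = 0) : v = 0 := by
  have h2 : ∑ i, v i ^ 2 = 0 := by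
    have := euclNorm_sq v; rw [h] at this; linarith
  funext i
  have := (Finset.sum_eq_zero_iff_of_nonneg (fun i _ => sq_nonneg (v i))).1 h2 i (Finset.mem_univ i)
  exact pow_eq_zero_iff two_ne_zero |>.mp this

lemma euclNorm_pos {v : n → ℝ} (h : v ≠ 0) : 0 < euclNorm v :=
  lt_of_le_of_ne (euclNorm_nonneg v) fun h' => h (euclNorm_eq_zero h'.symm)

lemma euclNorm_smul (a : ℝ) (v : n → ℝ) : euclNorm (a • v) = |a| * euclNorm v := by
  unfold euclNorm
  rw [← Real.sqrt_sq_eq_abs, ← Real.sqrt_mul (sq_nonneg a), Finset.mul_sum]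
  congr 1; apply Finset.sum_congr rfl; intro i _
  simp [Pi.smul_apply, smul_eq_mul, mul_pow]

lemma inner_le_norms (v w : n → ℝ) : ∑ i, v i * w i ≤ euclNorm v * euclNorm w := by
  have h := Finset.sum_mul_sq_le_sq_mul_sq Finset.univ v w
  have hvw : (euclNorm v * euclNorm w) ^ 2 = (∑ i, v i ^ 2) * ∑ i, w i ^ 2 := by
    rw [mul_pow, euclNorm_sq, euclNorm_sq]
  have hnn : 0 ≤ euclNorm v * euclNorm w :=
    mul_nonneg (euclNorm_nonneg v) (euclNorm_nonneg w)
  nlinarith [le_abs_self (∑ i, v i * w i), abs_nonneg (∑ i, v i * w i),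
    sq_abs (∑ i, v i * w i)]

lemma frobNorm_nonneg (M : Matrix m n ℝ) : 0 ≤ frobNorm M := Real.sqrt_nonneg _

lemma frobNorm_sq (M : Matrix m n ℝ) : frobNorm M ^ 2 = ∑ i, ∑ j, M i j ^ 2 :=
  Real.sq_sqrt (Finset.sum_nonneg fun _ _ => esq_nonneg _)

lemma frobNorm_pos {M : Matrix m n ℝ} (h : M ≠ 0) : 0 < frobNorm M := by
  rcases lt_or_eq_of_le (frobNorm_nonneg M) with h' | h'
  · exact h'
  · exfalso; apply h
    have h2 : ∑ i, ∑ j, M i j ^ 2 = 0 := by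
      have := frobNorm_sq M; rw [← h'] at this; linarith
    ext i j
    have hi := (Finset.sum_eq_zero_iff_of_nonneg (fun i _ => esq_nonneg (M i))).1 h2 i
      (Finset.mem_univ i)
    have hij := (Finset.sum_eq_zero_iff_of_nonneg (fun j _ => sq_nonneg (M i j))).1 hi j
      (Finset.mem_univ j)
    simpa using pow_eq_zero_iff two_ne_zero |>.mp hij

lemma esq_mulVec_le_frob (M : Matrix m n ℝ) (v : n → ℝ) :
    ∑ i, (M.mulVec v) i ^ 2 ≤ frobNorm M ^ 2 * ∑ j, v j ^ 2 := by
  rw [frobNorm_sq, Finset.sum_mul]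
  apply Finset.sum_le_sum
  intro i _
  calc (M.mulVec v) i ^ 2 = (∑ j, M i j * v j) ^ 2 := by rfl
    _ ≤ (∑ j, M i j ^ 2) * ∑ j, v j ^ 2 := Finset.sum_mul_sq_le_sq_mul_sq _ _ _

lemma euclNorm_mulVec_le_frob (M : Matrix m n ℝ) (v : n → ℝ) :
    euclNorm (M.mulVec v) ≤ frobNorm M * euclNorm v := by
  have h := esq_mulVec_le_frob M v
  have := Real.sqrt_le_sqrt h
  rw [Real.sqrt_mul (sq_nonneg _), Real.sqrt_sq (frobNorm_nonneg M)] at this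
  exact this

lemma specSet_bddAbove (M : Matrix m n ℝ) :
    BddAbove {x : ℝ | ∃ v : n → ℝ, euclNorm v = 1 ∧ x = euclNorm (M.mulVec v)} := by
  refine ⟨frobNorm M, ?_⟩
  rintro x ⟨v, hv, rfl⟩
  calc euclNorm (M.mulVec v) ≤ frobNorm M * euclNorm v := euclNorm_mulVec_le_frob M v
    _ = frobNorm M := by rw [hv, mul_one]

lemma specNorm_nonneg (M : Matrix m n ℝ) : 0 ≤ specNorm M :=
  Real.sSup_nonneg fun x => by rintro ⟨v, _, rfl⟩; exact euclNorm_nonneg _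

lemma euclNorm_mulVec_le_spec (M : Matrix m n ℝ) (v : n → ℝ) :
    euclNorm (M.mulVec v) ≤ specNorm M * euclNorm v := by
  by_cases hv : v = 0
  · subst hv
    simp [Matrix.mulVec_zero]
    rw [show euclNorm (0 : m → ℝ) = 0 by
      simp [euclNorm], show euclNorm (0 : n → ℝ) = 0 by simp [euclNorm], mul_zero]
  · have hpos := euclNorm_pos hv
    set c := euclNorm v with hc
    have hu : euclNorm (c⁻¹ • v) = 1 := by
      rw [euclNorm_smul, abs_of_pos (inv_pos.2 hpos), ← hc, inv_mul_cancel₀ hpos.ne']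
    have hmem : euclNorm (M.mulVec (c⁻¹ • v)) ∈
        {x : ℝ | ∃ w : n → ℝ, euclNorm w = 1 ∧ x = euclNorm (M.mulVec w)} :=
      ⟨c⁻¹ • v, hu, rfl⟩
    have hle := le_csSup (specSet_bddAbove M) hmem
    have hmv : M.mulVec (c⁻¹ • v) = c⁻¹ • M.mulVec v := by
      rw [Matrix.mulVec_smul]
    rw [hmv, euclNorm_smul, abs_of_pos (inv_pos.2 hpos)] at hle
    have : euclNorm (M.mulVec v) ≤ c * specNorm M := by
      rw [← mul_le_mul_iff_right₀ (inv_pos.2 hpos)]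
      calc c⁻¹ * euclNorm (M.mulVec v) ≤ specNorm M := hle
        _ = c⁻¹ * (c * specNorm M) := by field_simp
    linarith [this, mul_comm c (specNorm M) ▸ this]

lemma specNorm_le_of (M : Matrix m n ℝ) (c : ℝ) (hc : 0 ≤ c)
    (h : ∀ v : n → ℝ, euclNorm (M.mulVec v) ≤ c * euclNorm v) : specNorm M ≤ c := by
  apply Real.sSup_le _ hc
  rintro x ⟨v, hv, rfl⟩
  calc euclNorm (M.mulVec v) ≤ c * euclNorm v := h v
    _ = c := by rw [hv, mul_one]

lemma specNorm_mul_le (A : Matrix m n ℝ) (B : Matrix n p ℝ) :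
    specNorm (A * B) ≤ specNorm A * specNorm B := by
  apply specNorm_le_of _ _ (mul_nonneg (specNorm_nonneg A) (specNorm_nonneg B))
  intro v
  rw [← Matrix.mulVec_mulVec]
  calc euclNorm (A.mulVec (B.mulVec v)) ≤ specNorm A * euclNorm (B.mulVec v) :=
        euclNorm_mulVec_le_spec A _
    _ ≤ specNorm A * (specNorm B * euclNorm v) :=
        mul_le_mul_of_nonneg_left (euclNorm_mulVec_le_spec B v) (specNorm_nonneg A)
    _ = specNorm A * specNorm B * euclNorm v := by ring

lemma specNorm_le_frob (M : Matrix m n ℝ) : specNorm M ≤ frobNorm M :=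
  specNorm_le_of M _ (frobNorm_nonneg M) (euclNorm_mulVec_le_frob M)

lemma specNorm_transpose_le (M : Matrix m n ℝ) : specNorm Mᵀ ≤ specNorm M := by
  apply specNorm_le_of _ _ (specNorm_nonneg M)
  intro v
  set t := euclNorm (Mᵀ.mulVec v) with ht
  have htnn : 0 ≤ t := euclNorm_nonneg _
  rcases eq_or_lt_of_le htnn with h0 | h0
  · rw [← h0]; exact mul_nonneg (specNorm_nonneg M) (euclNorm_nonneg v)
  · have key : t ^ 2 ≤ specNorm M * euclNorm v * t := by
      have hid : t ^ 2 = ∑ i, v i * (M.mulVec (Mᵀ.mulVec v)) i := by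
        rw [ht, euclNorm_sq]
        simp only [Matrix.mulVec, dotProduct, Matrix.transpose_apply, sq,
          Finset.sum_mul, Finset.mul_sum]
        rw [Finset.sum_comm]
        refine Finset.sum_congr rfl fun i _ => Finset.sum_congr rfl fun j _ => ?_
        try ring
        try (refine Finset.sum_congr rfl fun k _ => ?_ ; ring)
      calc t ^ 2 ≤ euclNorm v * euclNorm (M.mulVec (Mᵀ.mulVec v)) := by
            rw [hid]; exact inner_le_norms v _
        _ ≤ euclNorm v * (specNorm M * t) := by
            have := euclNorm_mulVec_le_spec M (Mᵀ.mulVec v)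
            rw [← ht] at this
            exact mul_le_mul_of_nonneg_left this (euclNorm_nonneg v)
        _ = specNorm M * euclNorm v * t := by ring
    nlinarith [key, h0]


lemma esq_mulVec_le_spec (M : Matrix m n ℝ) (v : n → ℝ) :
    ∑ i, (M.mulVec v) i ^ 2 ≤ specNorm M ^ 2 * ∑ j, v j ^ 2 := by
  have h := pow_le_pow_left₀ (euclNorm_nonneg (M.mulVec v)) (euclNorm_mulVec_le_spec M v) 2
  rw [mul_pow, euclNorm_sq, euclNorm_sq] at h
  exact h

lemma frobSq_mulLeft_ge {q : Type*} [Fintype q] (A : Matrix q n ℝ) (σ : ℝ) (hσ : 0 ≤ σ)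
    (hlow : ∀ v : q → ℝ, σ * euclNorm v ≤ euclNorm (Aᵀ.mulVec v)) (X : Matrix q p ℝ) :
    σ ^ 2 * ∑ i, ∑ j, X i j ^ 2 ≤ ∑ i, ∑ j, (Aᵀ * X) i j ^ 2 := by
  have hcol : ∀ j, σ ^ 2 * ∑ i, X i j ^ 2 ≤ ∑ i, (Aᵀ * X) i j ^ 2 := by
    intro j
    have h := pow_le_pow_left₀ (mul_nonneg hσ (euclNorm_nonneg _))
      (hlow (fun k => X k j)) 2
    rw [mul_pow, euclNorm_sq, euclNorm_sq] at h
    have hent : ∀ i, (Aᵀ.mulVec (fun k => X k j)) i = (Aᵀ * X) i j := by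
      intro i; simp [Matrix.mulVec, Matrix.mul_apply, dotProduct]
    calc σ ^ 2 * ∑ i, X i j ^ 2 ≤ ∑ i, (Aᵀ.mulVec (fun k => X k j)) i ^ 2 := h
      _ = ∑ i, (Aᵀ * X) i j ^ 2 := by
          exact Finset.sum_congr rfl fun i _ => by rw [hent]
  calc σ ^ 2 * ∑ i, ∑ j, X i j ^ 2 = ∑ j, σ ^ 2 * ∑ i, X i j ^ 2 := by
        rw [Finset.sum_comm (s := Finset.univ) (t := Finset.univ), Finset.mul_sum]
    _ ≤ ∑ j, ∑ i, (Aᵀ * X) i j ^ 2 := Finset.sum_le_sum fun j _ => hcol j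
    _ = ∑ i, ∑ j, (Aᵀ * X) i j ^ 2 := Finset.sum_comm

lemma frobSq_mulRight_ge {q : Type*} [Fintype q] (A : Matrix q n ℝ) (σ : ℝ) (hσ : 0 ≤ σ)
    (hlow : ∀ v : q → ℝ, σ * euclNorm v ≤ euclNorm (Aᵀ.mulVec v)) (Y : Matrix p q ℝ) :
    σ ^ 2 * ∑ i, ∑ j, Y i j ^ 2 ≤ ∑ i, ∑ j, (Y * A) i j ^ 2 := by
  rw [Finset.mul_sum]
  apply Finset.sum_le_sum
  intro i _
  have h := pow_le_pow_left₀ (mul_nonneg hσ (euclNorm_nonneg _)) (hlow (Y i)) 2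
  rw [mul_pow, euclNorm_sq, euclNorm_sq] at h
  have hent : ∀ j, (Aᵀ.mulVec (Y i)) j = (Y * A) i j := by
    intro j
    simp [Matrix.mulVec, Matrix.mul_apply, dotProduct, mul_comm]
  calc σ ^ 2 * ∑ j, Y i j ^ 2 ≤ ∑ j, (Aᵀ.mulVec (Y i)) j ^ 2 := h
    _ = ∑ j, (Y * A) i j ^ 2 := Finset.sum_congr rfl fun j _ => by rw [hent]

end Helpers

section Kron

variable {r : ℕ}

lemma frobSq_kron (B1 B2 : Matrix (Fin r) (Fin r) ℝ) :
    ∑ p1, ∑ p2, ((B1 ⊗ₖ B2) p1 p2) ^ 2 =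
      (∑ i, ∑ j, B1 i j ^ 2) * ∑ k, ∑ l, B2 k l ^ 2 := by
  have h1 : (∑ i, ∑ j, B1 i j ^ 2) * (∑ k, ∑ l, B2 k l ^ 2)
      = ∑ i, ∑ k, (∑ j, B1 i j ^ 2) * (∑ l, B2 k l ^ 2) :=
    Finset.sum_mul_sum _ _ _ _
  have h2 : ∀ i k, (∑ j, B1 i j ^ 2) * (∑ l, B2 k l ^ 2)
      = ∑ j, ∑ l, B1 i j ^ 2 * B2 k l ^ 2 := fun i k => Finset.sum_mul_sum _ _ _ _
  calc ∑ p1, ∑ p2, ((B1 ⊗ₖ B2) p1 p2) ^ 2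
      = ∑ i, ∑ k, ∑ j, ∑ l, B1 i j ^ 2 * B2 k l ^ 2 := by
        rw [Fintype.sum_prod_type]
        refine Finset.sum_congr rfl fun i _ => Finset.sum_congr rfl fun k _ => ?_
        rw [Fintype.sum_prod_type]
        refine Finset.sum_congr rfl fun j _ => Finset.sum_congr rfl fun l _ => ?_
        simp [Matrix.kroneckerMap_apply, mul_pow]
    _ = (∑ i, ∑ j, B1 i j ^ 2) * ∑ k, ∑ l, B2 k l ^ 2 := by
        rw [h1]
        exact Finset.sum_congr rfl fun i _ => Finset.sum_congr rfl fun k _ => (h2 i k).symm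

lemma frobNorm_kron (B1 B2 : Matrix (Fin r) (Fin r) ℝ) :
    frobNorm (B1 ⊗ₖ B2) = frobNorm B1 * frobNorm B2 := by
  unfold frobNorm
  rw [frobSq_kron]; exact Real.sqrt_mul (Finset.sum_nonneg fun _ _ => esq_nonneg _) _

lemma spec_kron_one_le (B : Matrix (Fin r) (Fin r) ℝ) :
    specNorm (B ⊗ₖ (1 : Matrix (Fin r) (Fin r) ℝ)) ≤ specNorm B := by
  apply specNorm_le_of _ _ (specNorm_nonneg B)
  intro v
  have hentry : ∀ i k, ((B ⊗ₖ (1 : Matrix (Fin r) (Fin r) ℝ)).mulVec v) (i, k) =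
      B.mulVec (fun j => v (j, k)) i := by
    intro i k
    simp only [Matrix.mulVec, dotProduct, Matrix.kroneckerMap_apply,
      Fintype.sum_prod_type, Matrix.one_apply]
    refine Finset.sum_congr rfl fun j _ => ?_
    simp [mul_ite, ite_mul]
  have hesq : ∑ q, ((B ⊗ₖ (1 : Matrix (Fin r) (Fin r) ℝ)).mulVec v) q ^ 2 ≤
      specNorm B ^ 2 * ∑ q, v q ^ 2 := by
    calc ∑ q, ((B ⊗ₖ (1 : Matrix (Fin r) (Fin r) ℝ)).mulVec v) q ^ 2
        = ∑ k, ∑ i, (B.mulVec (fun j => v (j, k))) i ^ 2 := by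
          rw [Fintype.sum_prod_type, Finset.sum_comm]
          exact Finset.sum_congr rfl fun k _ => Finset.sum_congr rfl fun i _ => by
            rw [hentry]
      _ ≤ ∑ k, specNorm B ^ 2 * ∑ j, v (j, k) ^ 2 :=
          Finset.sum_le_sum fun k _ => esq_mulVec_le_spec B _
      _ = specNorm B ^ 2 * ∑ q, v q ^ 2 := by
          rw [← Finset.mul_sum, Fintype.sum_prod_type, Finset.sum_comm]
  have := Real.sqrt_le_sqrt hesq
  rw [Real.sqrt_mul (sq_nonneg _), Real.sqrt_sq (specNorm_nonneg B)] at this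
  exact this

lemma spec_one_kron_le (B : Matrix (Fin r) (Fin r) ℝ) :
    specNorm ((1 : Matrix (Fin r) (Fin r) ℝ) ⊗ₖ B) ≤ specNorm B := by
  apply specNorm_le_of _ _ (specNorm_nonneg B)
  intro v
  have hentry : ∀ i k, (((1 : Matrix (Fin r) (Fin r) ℝ) ⊗ₖ B).mulVec v) (i, k) =
      B.mulVec (fun l => v (i, l)) k := by
    intro i k
    simp only [Matrix.mulVec, dotProduct, Matrix.kroneckerMap_apply,
      Fintype.sum_prod_type, Matrix.one_apply]
    rw [Finset.sum_comm]
    refine Finset.sum_congr rfl fun l _ => ?_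
    simp [mul_ite, ite_mul]
  have hesq : ∑ q, (((1 : Matrix (Fin r) (Fin r) ℝ) ⊗ₖ B).mulVec v) q ^ 2 ≤
      specNorm B ^ 2 * ∑ q, v q ^ 2 := by
    calc ∑ q, (((1 : Matrix (Fin r) (Fin r) ℝ) ⊗ₖ B).mulVec v) q ^ 2
        = ∑ i, ∑ k, (B.mulVec (fun l => v (i, l))) k ^ 2 := by
          rw [Fintype.sum_prod_type]
          exact Finset.sum_congr rfl fun i _ => Finset.sum_congr rfl fun k _ => by
            rw [hentry]
      _ ≤ ∑ i, specNorm B ^ 2 * ∑ l, v (i, l) ^ 2 :=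
          Finset.sum_le_sum fun i _ => esq_mulVec_le_spec B _
      _ = specNorm B ^ 2 * ∑ q, v q ^ 2 := by
          rw [← Finset.mul_sum, Fintype.sum_prod_type]
  have := Real.sqrt_le_sqrt hesq
  rw [Real.sqrt_mul (sq_nonneg _), Real.sqrt_sq (specNorm_nonneg B)] at this
  exact this

lemma spec_kron_le (B1 B2 : Matrix (Fin r) (Fin r) ℝ) :
    specNorm (B1 ⊗ₖ B2) ≤ specNorm B1 * specNorm B2 := by
  have hdecomp : B1 ⊗ₖ B2 = (B1 ⊗ₖ (1 : Matrix (Fin r) (Fin r) ℝ)) *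
      ((1 : Matrix (Fin r) (Fin r) ℝ) ⊗ₖ B2) := by
    rw [← Matrix.mul_kronecker_mul, Matrix.mul_one, Matrix.one_mul]
  rw [hdecomp]
  calc specNorm _ ≤ specNorm (B1 ⊗ₖ (1 : Matrix (Fin r) (Fin r) ℝ)) *
        specNorm ((1 : Matrix (Fin r) (Fin r) ℝ) ⊗ₖ B2) := specNorm_mul_le _ _
    _ ≤ specNorm B1 * specNorm B2 :=
        mul_le_mul (spec_kron_one_le B1) (spec_one_kron_le B2)
          (specNorm_nonneg _) (specNorm_nonneg B1)

end Kron

/-- the paper's Lemma A.2: if `M₁, M₂` have smallest singular values at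
least `σ₁, σ₂` (for their transposes acting on vectors) and spectral norms at most
`κσ₁, κσ₂`, and `S = M₁ᵀ (B¹ ⊗ B²) M₂` satisfies `‖S‖₂² ≥ α ‖S‖_F²`, then both `B¹`
and `B²` are approximately rank one: the products of their spectral-to-Frobenius norm
ratios is at least `α/κ⁴`, and in particular each ratio is at least `α/κ⁴`. -/
theorem approx_rank_one_kronecker (r m p : ℕ) (hr : 1 ≤ r)
    (B1 B2 : Matrix (Fin r) (Fin r) ℝ) (hB1 : B1 ≠ 0) (hB2 : B2 ≠ 0)
    (M1 : Matrix (Fin r × Fin r) (Fin m) ℝ) (M2 : Matrix (Fin r × Fin r) (Fin p) ℝ)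
    (σ1 σ2 κ : ℝ) (hσ1 : 0 < σ1) (hσ2 : 0 < σ2) (hκ : 1 ≤ κ)
    (hM1low : ∀ v : Fin r × Fin r → ℝ, σ1 * euclNorm v ≤ euclNorm (M1ᵀ.mulVec v))
    (hM2low : ∀ v : Fin r × Fin r → ℝ, σ2 * euclNorm v ≤ euclNorm (M2ᵀ.mulVec v))
    (hM1up : specNorm M1 ≤ κ * σ1) (hM2up : specNorm M2 ≤ κ * σ2)
    (α : ℝ) (hα0 : 0 < α) (hα1 : α ≤ 1)
    (hS : α * frobNorm (M1ᵀ * (B1 ⊗ₖ B2) * M2) ^ 2 ≤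
      specNorm (M1ᵀ * (B1 ⊗ₖ B2) * M2) ^ 2) :
    α / κ ^ 4 ≤ (specNorm B1 ^ 2 / frobNorm B1 ^ 2) * (specNorm B2 ^ 2 / frobNorm B2 ^ 2) ∧
    (α / κ ^ 4) * frobNorm B1 ^ 2 ≤ specNorm B1 ^ 2 ∧
    (α / κ ^ 4) * frobNorm B2 ^ 2 ≤ specNorm B2 ^ 2 := by
  have hs1 := specNorm_nonneg B1
  have hs2 := specNorm_nonneg B2
  have hF1 : 0 < frobNorm B1 := frobNorm_pos hB1
  have hF2 : 0 < frobNorm B2 := frobNorm_pos hB2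
  have hκ0 : (0:ℝ) < κ := lt_of_lt_of_le one_pos hκ
  set K := B1 ⊗ₖ B2 with hKdef
  set S := M1ᵀ * K * M2 with hSdef
  -- Frobenius lower bound
  have hKM2 : σ2 ^ 2 * ∑ i, ∑ j, (M1ᵀ * K) i j ^ 2 ≤ ∑ i, ∑ j, S i j ^ 2 :=
    frobSq_mulRight_ge M2 σ2 hσ2.le hM2low (M1ᵀ * K)
  have hM1K : σ1 ^ 2 * ∑ i, ∑ j, K i j ^ 2 ≤ ∑ i, ∑ j, (M1ᵀ * K) i j ^ 2 :=
    frobSq_mulLeft_ge M1 σ1 hσ1.le hM1low K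
  have hKfrob : ∑ i, ∑ j, K i j ^ 2 = frobNorm B1 ^ 2 * frobNorm B2 ^ 2 := by
    rw [frobNorm_sq, frobNorm_sq, hKdef]
    exact frobSq_kron B1 B2
  have hfrobS : σ1 ^ 2 * σ2 ^ 2 * (frobNorm B1 ^ 2 * frobNorm B2 ^ 2) ≤ frobNorm S ^ 2 := by
    rw [frobNorm_sq S]
    calc σ1 ^ 2 * σ2 ^ 2 * (frobNorm B1 ^ 2 * frobNorm B2 ^ 2)
        = σ2 ^ 2 * (σ1 ^ 2 * ∑ i, ∑ j, K i j ^ 2) := by rw [hKfrob]; ring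
      _ ≤ σ2 ^ 2 * ∑ i, ∑ j, (M1ᵀ * K) i j ^ 2 :=
          mul_le_mul_of_nonneg_left hM1K (sq_nonneg σ2)
      _ ≤ ∑ i, ∑ j, S i j ^ 2 := hKM2
  -- spectral upper bound
  have hspecS : specNorm S ≤ (κ * σ1) * (specNorm B1 * specNorm B2) * (κ * σ2) := by
    have hT : specNorm M1ᵀ ≤ κ * σ1 := le_trans (specNorm_transpose_le M1) hM1up
    have hinner : specNorm M1ᵀ * specNorm K ≤ (κ * σ1) * (specNorm B1 * specNorm B2) :=
      mul_le_mul hT (hKdef ▸ spec_kron_le B1 B2) (specNorm_nonneg K) (by positivity)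
    calc specNorm S ≤ specNorm (M1ᵀ * K) * specNorm M2 := specNorm_mul_le _ _
      _ ≤ (specNorm M1ᵀ * specNorm K) * specNorm M2 :=
          mul_le_mul_of_nonneg_right (specNorm_mul_le _ _) (specNorm_nonneg _)
      _ ≤ ((κ * σ1) * (specNorm B1 * specNorm B2)) * (κ * σ2) :=
          mul_le_mul hinner hM2up (specNorm_nonneg M2)
            (mul_nonneg (by positivity) (mul_nonneg hs1 hs2))
  have hspecS2 : specNorm S ^ 2 ≤
      κ ^ 4 * σ1 ^ 2 * σ2 ^ 2 * (specNorm B1 ^ 2 * specNorm B2 ^ 2) := by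
    have h := pow_le_pow_left₀ (specNorm_nonneg S) hspecS 2
    calc specNorm S ^ 2 ≤ ((κ * σ1) * (specNorm B1 * specNorm B2) * (κ * σ2)) ^ 2 := h
      _ = κ ^ 4 * σ1 ^ 2 * σ2 ^ 2 * (specNorm B1 ^ 2 * specNorm B2 ^ 2) := by ring
  -- combine
  have hc : (0:ℝ) < σ1 ^ 2 * σ2 ^ 2 := by positivity
  have chain : α * (σ1 ^ 2 * σ2 ^ 2 * (frobNorm B1 ^ 2 * frobNorm B2 ^ 2)) ≤
      κ ^ 4 * σ1 ^ 2 * σ2 ^ 2 * (specNorm B1 ^ 2 * specNorm B2 ^ 2) :=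
    le_trans (le_trans (mul_le_mul_of_nonneg_left hfrobS hα0.le) hS) hspecS2
  have key : α * (frobNorm B1 ^ 2 * frobNorm B2 ^ 2) ≤
      κ ^ 4 * (specNorm B1 ^ 2 * specNorm B2 ^ 2) := by
    have h' : (α * (frobNorm B1 ^ 2 * frobNorm B2 ^ 2)) * (σ1 ^ 2 * σ2 ^ 2) ≤
        (κ ^ 4 * (specNorm B1 ^ 2 * specNorm B2 ^ 2)) * (σ1 ^ 2 * σ2 ^ 2) := by
      linarith [chain]
    exact le_of_mul_le_mul_right h' hc
  have hs1f : specNorm B1 ^ 2 ≤ frobNorm B1 ^ 2 :=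
    pow_le_pow_left₀ hs1 (specNorm_le_frob B1) 2
  have hs2f : specNorm B2 ^ 2 ≤ frobNorm B2 ^ 2 :=
    pow_le_pow_left₀ hs2 (specNorm_le_frob B2) 2
  refine ⟨?_, ?_, ?_⟩
  · rw [div_mul_div_comm, div_le_div_iff₀ (by positivity)
      (mul_pos (pow_pos hF1 2) (pow_pos hF2 2))]
    linarith [key]
  · have hmul : 0 ≤ κ ^ 4 * specNorm B1 ^ 2 :=
      mul_nonneg (by positivity) (sq_nonneg _)
    have h4 : α * frobNorm B1 ^ 2 * frobNorm B2 ^ 2 ≤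
        κ ^ 4 * specNorm B1 ^ 2 * frobNorm B2 ^ 2 := by
      linarith [key, mul_le_mul_of_nonneg_left hs2f hmul]
    have h5 : α * frobNorm B1 ^ 2 ≤ κ ^ 4 * specNorm B1 ^ 2 :=
      le_of_mul_le_mul_right h4 (pow_pos hF2 2)
    rw [div_mul_eq_mul_div, div_le_iff₀ (by positivity : (0:ℝ) < κ ^ 4)]
    linarith [h5]
  · have hmul : 0 ≤ κ ^ 4 * specNorm B2 ^ 2 :=
      mul_nonneg (by positivity) (sq_nonneg _)
    have h4 : α * frobNorm B2 ^ 2 * frobNorm B1 ^ 2 ≤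
        κ ^ 4 * specNorm B2 ^ 2 * frobNorm B1 ^ 2 := by
      linarith [key, mul_le_mul_of_nonneg_left hs1f hmul]
    have h5 : α * frobNorm B2 ^ 2 ≤ κ ^ 4 * specNorm B2 ^ 2 :=
      le_of_mul_le_mul_right h4 (pow_pos hF1 2)
    rw [div_mul_eq_mul_div, div_le_iff₀ (by positivity : (0:ℝ) < κ ^ 4)]
    linarith [h5]
end

section
/- Let a, b, c, r be positive natural numbers. Let T̂ and E be real matrices with rows indexed by [a] and columns indexed by pairs in [b]×[c], and set T := T̂ + E. Suppose that (i) the matrix obtained by reindexing T with rows indexed by [a]×[c] and columns indexed by [b] (entry at ((i,k), j) equal to T(i,(j,k))) has rank at most r, and (ii) the matrix obtained by reindexing T with rows indexed by [a]×[b] and columns indexed by [c] (entry at ((i,j), k) equal to T(i,(j,k))) has rank at most r. Then there exist a real b×b matrix P₁ and a real c×c matrix P₂, each symmetric, idempotent, and of rank at most r, such that ‖T̂·(P₁ ⊗ P₂) − T̂‖_F² ≤ 2‖E‖_F². -/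
open Matrix
open scoped Kronecker

/-!
Take `P₁`, `P₂` to be the orthogonal projections onto the row spaces of the two matricizations
of `T = T̂ + E`. Then `T (P₁ ⊗ I) = T` and `T (I ⊗ P₂) = T`, hence `T (P₁ ⊗ P₂) = T` and
`T̂ (P₁ ⊗ P₂) - T̂ = E (I - P₁ ⊗ P₂)`. Since `P₁ ⊗ P₂` is again an orthogonal projection,
Pythagoras gives `‖E (I - P₁ ⊗ P₂)‖_F ≤ ‖E‖_F`, so the bound even holds without the factor `2`.
-/

namespace Matrix

section StarProjection

variable {𝕜 : Type*} [RCLike 𝕜] {m n : Type*} [Fintype m] [Fintype n]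

open scoped ComplexOrder in
theorem exists_isStarProjection_rank_eq_mul_eq_self (M : Matrix m n 𝕜) :
    ∃ P : Matrix n n 𝕜, IsStarProjection P ∧ P.rank = M.rank ∧ M * P = M := by
  classical
  set V := LinearMap.range (toEuclideanLin Mᴴ)
  set P := (toEuclideanCLM (n := n) (𝕜 := 𝕜)).symm V.starProjection
  have hP : IsStarProjection P :=
    isStarProjection_starProjection.map (toEuclideanCLM (n := n) (𝕜 := 𝕜)).symm
  have hPV : toEuclideanLin P = V.starProjection := by
    rw [← coe_toEuclideanCLM_eq_toEuclideanLin, StarAlgEquiv.apply_symm_apply]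
  refine ⟨P, hP, ?_, ?_⟩
  · rw [rank_eq_finrank_range_toLin P (EuclideanSpace.basisFun n 𝕜).toBasis
      (EuclideanSpace.basisFun n 𝕜).toBasis, ← toEuclideanLin_eq_toLin_orthonormal, hPV,
      ← rank_conjTranspose M, rank_eq_finrank_range_toLin Mᴴ (EuclideanSpace.basisFun n 𝕜).toBasis
      (EuclideanSpace.basisFun m 𝕜).toBasis, ← toEuclideanLin_eq_toLin_orthonormal, show LinearMap.range (V.starProjection : EuclideanSpace 𝕜 n →ₗ[𝕜] _) = V from
      V.range_starProjection]
  · apply conjTranspose_injective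
    rw [conjTranspose_mul, ← star_eq_conjTranspose, hP.isSelfAdjoint.star_eq]
    apply toEuclideanLin.injective
    rw [toLpLin_mul_same, hPV]
    ext1 x
    exact V.starProjection_eq_self_iff.mpr (LinearMap.mem_range_self _ x)

end StarProjection

section Kronecker

variable {R : Type*} {l m n : Type*} [Fintype m] [Fintype n]

theorem IsStarProjection.kronecker [CommSemiring R] [StarRing R] {P : Matrix m m R}
    {Q : Matrix n n R} (hP : IsStarProjection P) (hQ : IsStarProjection Q) :
    IsStarProjection (P ⊗ₖ Q) where
  isIdempotentElem := by
    rw [IsIdempotentElem, ← mul_kronecker_mul, hP.isIdempotentElem.eq, hQ.isIdempotentElem.eq]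
  isSelfAdjoint := by
    rw [IsSelfAdjoint, star_eq_conjTranspose, conjTranspose_kronecker, ← star_eq_conjTranspose,
      ← star_eq_conjTranspose, hP.isSelfAdjoint.star_eq, hQ.isSelfAdjoint.star_eq]

variable [NonAssocSemiring R]

theorem mul_kronecker_one_eq_self [DecidableEq n] {T : Matrix l (m × n) R} {P : Matrix m m R}
    (h : (of fun (ik : l × n) (j : m) => T ik.1 (j, ik.2)) * P =
      of fun (ik : l × n) (j : m) => T ik.1 (j, ik.2)) :
    T * (P ⊗ₖ (1 : Matrix n n R)) = T := by
  ext i ⟨j, k⟩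
  simpa [mul_apply, one_apply, Fintype.sum_prod_type] using congrFun (congrFun h (i, k)) j

theorem mul_one_kronecker_eq_self [DecidableEq m] {T : Matrix l (m × n) R} {P : Matrix n n R}
    (h : (of fun (ij : l × m) (k : n) => T ij.1 (ij.2, k)) * P =
      of fun (ij : l × m) (k : n) => T ij.1 (ij.2, k)) :
    T * ((1 : Matrix m m R) ⊗ₖ P) = T := by
  ext i ⟨j, k⟩
  simpa [mul_apply, one_apply, Fintype.sum_prod_type] using congrFun (congrFun h (i, j)) k

end Kronecker

end Matrix

section Frobenius

variable {m n : Type*} [Fintype n]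

theorem IsStarProjection.transpose_eq {P : Matrix n n ℝ} (hP : IsStarProjection P) : Pᵀ = P := by
  simpa [star_eq_conjTranspose] using hP.isSelfAdjoint.star_eq

theorem IsStarProjection.mul_mul_transpose {P : Matrix n n ℝ} (hP : IsStarProjection P)
    (E : Matrix m n ℝ) : E * P * (E * P)ᵀ = E * P * Eᵀ := by
  rw [transpose_mul, hP.transpose_eq, Matrix.mul_assoc, ← Matrix.mul_assoc P,
    hP.isIdempotentElem.eq, Matrix.mul_assoc]

variable [Fintype m]

theorem frobNorm_sq_eq_trace (M : Matrix m n ℝ) : frobNorm M ^ 2 = trace (M * Mᵀ) := by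
  rw [frobNorm, Real.sq_sqrt (by positivity)]
  simp [trace, mul_apply, sq]

theorem frobNorm_mul_sq_add_frobNorm_mul_one_sub_sq [DecidableEq n] {P : Matrix n n ℝ}
    (hP : IsStarProjection P) (E : Matrix m n ℝ) :
    frobNorm (E * P) ^ 2 + frobNorm (E * (1 - P)) ^ 2 = frobNorm E ^ 2 := by
  rw [frobNorm_sq_eq_trace, frobNorm_sq_eq_trace, frobNorm_sq_eq_trace, hP.mul_mul_transpose,
    hP.one_sub.mul_mul_transpose, ← trace_add, ← Matrix.add_mul, ← Matrix.mul_add,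
    add_sub_cancel, Matrix.mul_one]

end Frobenius

theorem sequential_projection_recovery_general (a b c r : ℕ)
    (That E : Matrix (Fin a) (Fin b × Fin c) ℝ)
    (h1 : (Matrix.of fun (ik : Fin a × Fin c) (j : Fin b) =>
      (That + E) ik.1 (j, ik.2)).rank ≤ r)
    (h2 : (Matrix.of fun (ij : Fin a × Fin b) (k : Fin c) =>
      (That + E) ij.1 (ij.2, k)).rank ≤ r) :
    ∃ (P1 : Matrix (Fin b) (Fin b) ℝ) (P2 : Matrix (Fin c) (Fin c) ℝ),
      P1ᵀ = P1 ∧ P1 * P1 = P1 ∧ P1.rank ≤ r ∧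
      P2ᵀ = P2 ∧ P2 * P2 = P2 ∧ P2.rank ≤ r ∧
      frobNorm (That * (P1 ⊗ₖ P2) - That) ^ 2 ≤ 2 * frobNorm E ^ 2 := by
  obtain ⟨P1, hP1, hP1r, hTP1⟩ := exists_isStarProjection_rank_eq_mul_eq_self
    (of fun (ik : Fin a × Fin c) (j : Fin b) => (That + E) ik.1 (j, ik.2))
  obtain ⟨P2, hP2, hP2r, hTP2⟩ := exists_isStarProjection_rank_eq_mul_eq_self
    (of fun (ij : Fin a × Fin b) (k : Fin c) => (That + E) ij.1 (ij.2, k))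
  have hT : (That + E) * (P1 ⊗ₖ P2) = That + E := by
    rw [← mul_one P1, ← one_mul P2, mul_kronecker_mul, ← Matrix.mul_assoc,
      mul_kronecker_one_eq_self hTP1, mul_one_kronecker_eq_self hTP2]
  have hdiff : That * (P1 ⊗ₖ P2) - That = E * (1 - P1 ⊗ₖ P2) := by
    rw [Matrix.add_mul] at hT
    rw [Matrix.mul_sub, Matrix.mul_one, sub_eq_sub_iff_add_eq_add, hT, add_comm]
  refine ⟨P1, P2, hP1.transpose_eq, hP1.isIdempotentElem.eq, hP1r ▸ h1,
    hP2.transpose_eq, hP2.isIdempotentElem.eq, hP2r ▸ h2, ?_⟩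
  rw [hdiff, ← frobNorm_mul_sq_add_frobNorm_mul_one_sub_sq (hP1.kronecker hP2) E]
  linarith [sq_nonneg (frobNorm (E * (P1 ⊗ₖ P2))), sq_nonneg (frobNorm (E * (1 - P1 ⊗ₖ P2)))]

/-- the paper's Lemma A.5: let `T = T̂ + E` be a noisy 3-tensor (rows in
`[a]`, columns in `[b] × [c]`) whose two reindexed matricizations (rows `[a] × [c]`,
columns `[b]`; and rows `[a] × [b]`, columns `[c]`) both have rank at most `r`. Then
there are orthogonal projections `P₁` (of size `b × b`) and `P₂` (of size `c × c`), each
symmetric, idempotent and of rank at most `r`, with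
`‖T̂ (P₁ ⊗ P₂) − T̂‖_F² ≤ 2 ‖E‖_F²`. -/
theorem sequential_projection_recovery (a b c r : ℕ)
    (ha : 0 < a) (hb : 0 < b) (hc : 0 < c) (hr : 0 < r)
    (That E : Matrix (Fin a) (Fin b × Fin c) ℝ)
    (h1 : (Matrix.of fun (ik : Fin a × Fin c) (j : Fin b) =>
      (That + E) ik.1 (j, ik.2)).rank ≤ r)
    (h2 : (Matrix.of fun (ij : Fin a × Fin b) (k : Fin c) =>
      (That + E) ij.1 (ij.2, k)).rank ≤ r) :
    ∃ (P1 : Matrix (Fin b) (Fin b) ℝ) (P2 : Matrix (Fin c) (Fin c) ℝ),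
      P1ᵀ = P1 ∧ P1 * P1 = P1 ∧ P1.rank ≤ r ∧
      P2ᵀ = P2 ∧ P2 * P2 = P2 ∧ P2.rank ≤ r ∧
      frobNorm (That * (P1 ⊗ₖ P2) - That) ^ 2 ≤ 2 * frobNorm E ^ 2 :=
  sequential_projection_recovery_general a b c r That E h1 h2
end
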